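/- Let K be a field. Suppose σ : ℙ²(K) → ℙ²(K) is a projective involution, C is a conic invariant under σ, and p₁,…,p₈ are eight distinct points on C with σ(p₁) = p₈, σ(p₂) = p₇, σ(p₃) = p₆, σ(p₄) = p₅. Assume the relevant pairs of lines below are distinct. Then the five intersection points (p₁p₈) ∩ (p₂p₇), (p₁p₅) ∩ (p₃p₇), (p₂p₅) ∩ (p₃p₈), (p₁p₆) ∩ (p₄p₇), (p₂p₆) ∩ (p₄p₈) are collinear. -/

import Mathlib

/-- Determinant of the 3×3 matrix with rows `p`, `q`, `r`; it vanishes iff the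
three points of ℙ²(K) represented by `p`, `q`, `r` are collinear. -/
def det3 {K : Type*} [CommRing K] (p q r : Fin 3 → K) : K :=
  Matrix.det (Matrix.of ![p, q, r])

set_option linter.unusedSectionVars false
set_option linter.unusedVariables false

namespace DPL
variable {K : Type*} [Field K]

-- cross product
def cp (u v : Fin 3 → K) : Fin 3 → K :=
  ![u 1 * v 2 - u 2 * v 1, u 2 * v 0 - u 0 * v 2, u 0 * v 1 - u 1 * v 0]
lemma dot3 (x y : Fin 3 → K) :
    dotProduct x y = x 0 * y 0 + x 1 * y 1 + x 2 * y 2 := by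
  simp [dotProduct, Fin.sum_univ_three]
lemma det3_eq (p q r : Fin 3 → K) :
    det3 p q r = p 0 * (q 1 * r 2 - q 2 * r 1) - p 1 * (q 0 * r 2 - q 2 * r 0)
      + p 2 * (q 0 * r 1 - q 1 * r 0) := by
  simp [det3, Matrix.det_fin_three]; ring
lemma cp_apply0 (u v : Fin 3 → K) : cp u v 0 = u 1 * v 2 - u 2 * v 1 := rfl
lemma cp_apply1 (u v : Fin 3 → K) : cp u v 1 = u 2 * v 0 - u 0 * v 2 := rfl
lemma cp_apply2 (u v : Fin 3 → K) : cp u v 2 = u 0 * v 1 - u 1 * v 0 := rfl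
lemma det3_eq_dot (x y z : Fin 3 → K) : det3 x y z = dotProduct x (cp y z) := by
  simp [det3_eq, dot3, cp_apply0, cp_apply1, cp_apply2]; ring
lemma det3_eq_dot' (x y z : Fin 3 → K) : det3 x y z = dotProduct (cp x y) z := by
  simp [det3_eq, dot3, cp_apply0, cp_apply1, cp_apply2]; ring

lemma sap (c : K) (x : Fin 3 → K) (i : Fin 3) : (c • x) i = c * x i := rfl

lemma vec_ext {x y : Fin 3 → K} (h0 : x 0 = y 0) (h1 : x 1 = y 1) (h2 : x 2 = y 2) : x = y := by
  funext i; fin_cases i <;> assumption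

lemma vec_ne_zero_iff (x : Fin 3 → K) : x ≠ 0 ↔ ¬(x 0 = 0 ∧ x 1 = 0 ∧ x 2 = 0) := by
  constructor
  · intro hx h; exact hx (vec_ext h.1 h.2.1 h.2.2)
  · intro h hx; exact h (by subst hx; exact ⟨rfl, rfl, rfl⟩)

lemma cp_anticomm (u v : Fin 3 → K) : cp u v = -cp v u := by
  apply vec_ext <;> simp only [cp_apply0, cp_apply1, cp_apply2, Pi.neg_apply] <;> ring

lemma cp_smul_left (c : K) (u v : Fin 3 → K) : cp (c • u) v = c • cp u v := by
  apply vec_ext <;> simp only [cp_apply0, cp_apply1, cp_apply2, sap] <;> ring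

lemma cp_smul_right (c : K) (u v : Fin 3 → K) : cp u (c • v) = c • cp u v := by
  apply vec_ext <;> simp only [cp_apply0, cp_apply1, cp_apply2, sap] <;> ring

lemma dot_cp_self_left (u v : Fin 3 → K) : dotProduct u (cp u v) = 0 := by
  simp [dot3, cp_apply0, cp_apply1, cp_apply2]; ring

lemma dot_cp_self_right (u v : Fin 3 → K) : dotProduct v (cp u v) = 0 := by
  simp [dot3, cp_apply0, cp_apply1, cp_apply2]; ring

lemma dot_smul_left (c : K) (x y : Fin 3 → K) :
    dotProduct (c • x) y = c * dotProduct x y := by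
  simp only [dot3, sap]; ring

/-- expansion: (a×b)×c = (a·c)b − (b·c)a -/
lemma cp_cp_expand (a b c : Fin 3 → K) :
    cp (cp a b) c = dotProduct a c • b - dotProduct b c • a := by
  apply vec_ext <;>
    simp only [cp_apply0, cp_apply1, cp_apply2, dot3, Pi.sub_apply, sap] <;> ring

/-- (x×y)×(x×z) = det3 x y z • x -/
lemma cp_cp_cp (x y z : Fin 3 → K) :
    cp (cp x y) (cp x z) = det3 x y z • x := by
  apply vec_ext <;>
    simp only [cp_apply0, cp_apply1, cp_apply2, det3_eq, sap] <;> ring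

/-- parallel from vanishing cross product -/
lemma cp_eq_zero {u : Fin 3 → K} (hu : u ≠ 0) {x : Fin 3 → K} (h : cp u x = 0) :
    ∃ c : K, x = c • u := by
  have h0 := congrFun h 0
  have h1 := congrFun h 1
  have h2 := congrFun h 2
  simp only [cp_apply0, cp_apply1, cp_apply2, Pi.zero_apply] at h0 h1 h2
  rw [vec_ne_zero_iff] at hu
  by_cases e0 : u 0 = 0
  · by_cases e1 : u 1 = 0
    · have e2 : u 2 ≠ 0 := fun e2 => hu ⟨e0, e1, e2⟩
      refine ⟨x 2 / u 2, vec_ext ?_ ?_ ?_⟩ <;> rw [sap, div_mul_eq_mul_div, eq_comm,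
        div_eq_iff e2]
      · linear_combination -h1
      · linear_combination h0
    · refine ⟨x 1 / u 1, vec_ext ?_ ?_ ?_⟩ <;> rw [sap, div_mul_eq_mul_div, eq_comm,
        div_eq_iff e1]
      · linear_combination h2
      · linear_combination -h0
  · refine ⟨x 0 / u 0, vec_ext ?_ ?_ ?_⟩ <;> rw [sap, div_mul_eq_mul_div, eq_comm,
      div_eq_iff e0]
    · linear_combination -h2
    · linear_combination h1

-- CHUNK2
lemma dot_comm (x y : Fin 3 → K) : dotProduct x y = dotProduct y x := by
  rw [dot3, dot3]; ring

lemma dot_smul_right (c : K) (x y : Fin 3 → K) :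
    dotProduct x (c • y) = c * dotProduct x y := by
  rw [dot3, dot3, sap, sap, sap]; ring

/-- a vector orthogonal to two vectors with nonzero cross product is a multiple of it -/
lemma perp_perp {a b x : Fin 3 → K} (ha : dotProduct a x = 0)
    (hb : dotProduct b x = 0) (hab : cp a b ≠ 0) (hx : x ≠ 0) :
    ∃ κ : K, κ ≠ 0 ∧ x = κ • cp a b := by
  have h : cp (cp a b) x = 0 := by
    rw [cp_cp_expand, ha, hb]; simp
  obtain ⟨c, hc⟩ := cp_eq_zero hab h
  refine ⟨c, fun hc0 => hx (by rw [hc, hc0, zero_smul]), hc⟩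

/-- dependence: if det3 x y z = 0 and x, y independent then z ∈ span {x,y} -/
lemma span_of_det3 {x y z : Fin 3 → K} (h : det3 x y z = 0) (hxy : cp x y ≠ 0) :
    ∃ α β : K, z = α • x + β • y := by
  have hx : x ≠ 0 := by
    intro h0
    apply hxy
    rw [h0]
    apply vec_ext <;> simp [cp_apply0, cp_apply1, cp_apply2]
  have h7 : cp (cp x y) (cp x z) = 0 := by rw [cp_cp_cp, h, zero_smul]
  obtain ⟨ρ, hρ⟩ := cp_eq_zero hxy h7
  have : cp x (z - ρ • y) = 0 := by
    have e1 : cp x (z - ρ • y) = cp x z - ρ • cp x y := by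
      have := cp_smul_right ρ x y
      apply vec_ext <;>
        simp only [cp_apply0, cp_apply1, cp_apply2, Pi.sub_apply, sap] <;> ring
    rw [e1, hρ]; simp
  obtain ⟨α, hα⟩ := cp_eq_zero hx this
  refine ⟨α, ρ, ?_⟩
  exact sub_eq_iff_eq_add.mp hα

lemma det3_smul₁ (c : K) (x y z : Fin 3 → K) : det3 (c • x) y z = c * det3 x y z := by
  rw [det3_eq, det3_eq, sap, sap, sap]; ring
lemma det3_smul₂ (c : K) (x y z : Fin 3 → K) : det3 x (c • y) z = c * det3 x y z := by
  rw [det3_eq, det3_eq, sap, sap, sap]; ring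
lemma det3_smul₃ (c : K) (x y z : Fin 3 → K) : det3 x y (c • z) = c * det3 x y z := by
  rw [det3_eq, det3_eq, sap, sap, sap]; ring
lemma det3_cyc (x y z : Fin 3 → K) : det3 x y z = det3 z x y := by
  rw [det3_eq, det3_eq]; ring
lemma det3_swap₁₂ (x y z : Fin 3 → K) : det3 x y z = -det3 y x z := by
  rw [det3_eq, det3_eq]; ring
lemma det3_swap₂₃ (x y z : Fin 3 → K) : det3 x y z = -det3 x z y := by
  rw [det3_eq, det3_eq]; ring
lemma det3_self₁₃ (x y : Fin 3 → K) : det3 x y x = 0 := by rw [det3_eq]; ring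
lemma det3_self₂₃ (x y : Fin 3 → K) : det3 x y y = 0 := by rw [det3_eq]; ring
lemma det3_add₃ (x y u v : Fin 3 → K) :
    det3 x y (u + v) = det3 x y u + det3 x y v := by
  simp only [det3_eq, Pi.add_apply]; ring

/-- Vandermonde for the standard conic parametrization -/
lemma vand (a b c d e f : K) :
    det3 ![a^2, a*b, b^2] ![c^2, c*d, d^2] ![e^2, e*f, f^2]
      = (a*d - c*b) * (a*f - e*b) * (c*f - e*d) := by
  rw [det3_eq]; simp only [Matrix.cons_val_zero, Matrix.cons_val_one, Matrix.head_cons,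
    Matrix.cons_val_two, Matrix.tail_cons]; ring

/-- Pascal's theorem for the parametrized conic -/
lemma pascal_psi (s₁ t₁ s₂ t₂ s₃ t₃ s₄ t₄ s₅ t₅ s₆ t₆ : K) :
    det3 (cp (cp ![s₁^2, s₁*t₁, t₁^2] ![s₂^2, s₂*t₂, t₂^2])
             (cp ![s₄^2, s₄*t₄, t₄^2] ![s₅^2, s₅*t₅, t₅^2]))
         (cp (cp ![s₂^2, s₂*t₂, t₂^2] ![s₃^2, s₃*t₃, t₃^2])
             (cp ![s₅^2, s₅*t₅, t₅^2] ![s₆^2, s₆*t₆, t₆^2]))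
         (cp (cp ![s₃^2, s₃*t₃, t₃^2] ![s₄^2, s₄*t₄, t₄^2])
             (cp ![s₆^2, s₆*t₆, t₆^2] ![s₁^2, s₁*t₁, t₁^2])) = 0 := by
  rw [det3_eq]
  simp only [cp_apply0, cp_apply1, cp_apply2, Matrix.cons_val_zero, Matrix.cons_val_one,
    Matrix.head_cons, Matrix.cons_val_two, Matrix.tail_cons]
  ring


-- CHUNK3
lemma mulVec3 (M : Matrix (Fin 3) (Fin 3) K) (x : Fin 3 → K) (i : Fin 3) :
    (M.mulVec x) i = M i 0 * x 0 + M i 1 * x 1 + M i 2 * x 2 := by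
  simp [Matrix.mulVec, dotProduct, Fin.sum_univ_three]

lemma mul3_apply (A B : Matrix (Fin 3) (Fin 3) K) (i j : Fin 3) :
    (A * B) i j = A i 0 * B 0 j + A i 1 * B 1 j + A i 2 * B 2 j := by
  simp [Matrix.mul_apply, Fin.sum_univ_three]

lemma det3_mulVec (Q : Matrix (Fin 3) (Fin 3) K) (a b c : Fin 3 → K) :
    det3 (Q.mulVec a) (Q.mulVec b) (Q.mulVec c) = Q.det * det3 a b c := by
  rw [det3_eq, det3_eq, Matrix.det_fin_three]
  simp only [mulVec3]
  ring

lemma sT_cp (S : Matrix (Fin 3) (Fin 3) K) (a b : Fin 3 → K) :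
    S.transpose.mulVec (cp (S.mulVec a) (S.mulVec b)) = S.det • cp a b := by
  apply vec_ext <;>
    simp only [mulVec3, cp_apply0, cp_apply1, cp_apply2, sap, Matrix.transpose_apply,
      Matrix.det_fin_three] <;> ring

lemma mulVec_inj {Q : Matrix (Fin 3) (Fin 3) K} (hQ : IsUnit Q.det) {x y : Fin 3 → K}
    (h : Q.mulVec x = Q.mulVec y) : x = y := by
  have := congrArg (Q⁻¹.mulVec ·) h
  simpa [Matrix.mulVec_mulVec, Matrix.nonsing_inv_mul Q hQ] using this

lemma mulVec_ne_zero {Q : Matrix (Fin 3) (Fin 3) K} (hQ : IsUnit Q.det) {x : Fin 3 → K}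
    (h : x ≠ 0) : Q.mulVec x ≠ 0 := by
  intro h0
  exact h (mulVec_inj hQ (by rw [h0, Matrix.mulVec_zero]))

lemma quad_transform (A Mq : Matrix (Fin 3) (Fin 3) K) (y : Fin 3 → K) :
    dotProduct (A.transpose.mulVec y) (Mq.mulVec (A.transpose.mulVec y))
      = dotProduct y ((A * Mq * A.transpose).mulVec y) := by
  simp only [dot3, mulVec3, mul3_apply, Matrix.transpose_apply]
  ring

lemma eigen_scalar {S : Matrix (Fin 3) (Fin 3) K} {μ : K} {n1 n2 n3 : Fin 3 → K}
    (h1 : S.mulVec n1 = μ • n1) (h2 : S.mulVec n2 = μ • n2) (h3 : S.mulVec n3 = μ • n3)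
    (hd : det3 n1 n2 n3 ≠ 0) : S = μ • (1 : Matrix (Fin 3) (Fin 3) K) := by
  set NN := (Matrix.of ![n1, n2, n3]).transpose with hNN
  have hdet : IsUnit NN.det := by
    rw [Matrix.det_transpose]
    exact isUnit_iff_ne_zero.mpr hd
  have key : S * NN = μ • NN := by
    ext i j
    have e1 := congrFun h1 i; rw [mulVec3, sap] at e1
    have e2 := congrFun h2 i; rw [mulVec3, sap] at e2
    have e3 := congrFun h3 i; rw [mulVec3, sap] at e3
    fin_cases j <;>
      simp only [mul3_apply, Matrix.smul_apply, hNN, Matrix.transpose_apply,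
        Matrix.of_apply, Fin.zero_eta, Fin.mk_one, Fin.isValue, Fin.reduceFinMk,
        Matrix.cons_val_zero, Matrix.cons_val_one, Matrix.head_cons,
        Matrix.cons_val_two, Matrix.tail_cons, smul_eq_mul]
    · exact e1
    · exact e2
    · exact e3
  calc S = S * (NN * NN⁻¹) := by rw [Matrix.mul_nonsing_inv NN hdet, mul_one]
  _ = (S * NN) * NN⁻¹ := by rw [mul_assoc]
  _ = (μ • NN) * NN⁻¹ := by rw [key]
  _ = μ • (NN * NN⁻¹) := by rw [Matrix.smul_mul]
  _ = μ • 1 := by rw [Matrix.mul_nonsing_inv NN hdet]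


-- CHUNK4
lemma conj_apply (A Mq : Matrix (Fin 3) (Fin 3) K) (i j : Fin 3) :
    (A * Mq * A.transpose) i j = dotProduct (A i) (Mq.mulVec (A j)) := by
  simp only [mul3_apply, Matrix.transpose_apply, dot3, mulVec3]; ring

/-- parametrization of the conic u xy + w xz + v yz = 0 -/
lemma param {u v w : K} (hu : u ≠ 0) (hv : v ≠ 0) (hw : w ≠ 0)
    {y : Fin 3 → K} (hy : y ≠ 0)
    (hC : u * (y 0) * (y 1) + w * (y 0) * (y 2) + v * (y 1) * (y 2) = 0) :
    ∃ σ τ μ : K, ¬(σ = 0 ∧ τ = 0) ∧ μ ≠ 0 ∧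
      y = μ • ![-(v*σ*τ), σ*(u*σ+w*τ), τ*(u*σ+w*τ)] := by
  by_cases h12 : y 1 = 0 ∧ y 2 = 0
  · have hy0 : y 0 ≠ 0 := by
      intro h0
      exact (vec_ne_zero_iff y).mp hy ⟨h0, h12.1, h12.2⟩
    refine ⟨w, -u, y 0 / (u*v*w), fun hh => hw hh.1, by
      simp [div_eq_zero_iff, hy0, hu, hv, hw], vec_ext ?_ ?_ ?_⟩ <;>
      rw [sap] <;>
      simp only [Matrix.cons_val_zero, Matrix.cons_val_one, Matrix.head_cons,
        Matrix.cons_val_two, Matrix.tail_cons]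
    · rw [eq_comm, div_mul_eq_mul_div, div_eq_iff (mul_ne_zero (mul_ne_zero hu hv) hw)]; ring
    · rw [h12.1]; ring
    · rw [h12.2]; ring
  · set k := u * y 1 + w * y 2 with hk
    have hkne : k ≠ 0 := by
      intro hk0
      rw [hk] at hk0
      have hv12 : v * y 1 * y 2 = 0 := by linear_combination hC - y 0 * hk0
      rcases mul_eq_zero.mp hv12 with h' | h2
      · rcases mul_eq_zero.mp h' with h'' | h1
        · exact hv h''
        · refine h12 ⟨h1, ?_⟩
          have hw2 : w * y 2 = 0 := by linear_combination hk0 - u * h1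
          exact (mul_eq_zero.mp hw2).resolve_left hw
      · refine h12 ⟨?_, h2⟩
        have hu1 : u * y 1 = 0 := by linear_combination hk0 - w * h2
        exact (mul_eq_zero.mp hu1).resolve_left hu
    refine ⟨y 1, y 2, k⁻¹, h12, inv_ne_zero hkne, vec_ext ?_ ?_ ?_⟩ <;> rw [sap] <;>
      simp only [Matrix.cons_val_zero, Matrix.cons_val_one, Matrix.head_cons,
        Matrix.cons_val_two, Matrix.tail_cons] <;>
      rw [eq_comm, inv_mul_eq_iff_eq_mul₀ hkne, hk]
    · linear_combination -hC
    · ring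
    · ring

-- CHUNK5
def Gmat (u v w : K) : Matrix (Fin 3) (Fin 3) K :=
  Matrix.of ![![0, -v, 0], ![u, w, 0], ![0, u, w]]

def Gadj (u v w : K) : Matrix (Fin 3) (Fin 3) K :=
  Matrix.of ![![w*w, v*w, 0], ![-(u*w), 0, 0], ![u*u, 0, u*v]]

lemma Gmat_mulVec (u v w σ τ : K) :
    (Gmat u v w).mulVec ![σ^2, σ*τ, τ^2] = ![-(v*σ*τ), σ*(u*σ+w*τ), τ*(u*σ+w*τ)] := by
  apply vec_ext <;>
    simp only [mulVec3, Gmat, Matrix.of_apply, Matrix.cons_val_zero, Matrix.cons_val_one,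
      Matrix.head_cons, Matrix.cons_val_two, Matrix.tail_cons] <;> ring

lemma Gadj_mul_Gmat (u v w : K) :
    Gadj u v w * Gmat u v w = (u*v*w) • (1 : Matrix (Fin 3) (Fin 3) K) := by
  ext i j
  fin_cases i <;> fin_cases j <;>
    simp only [mul3_apply, Gmat, Gadj, Matrix.one_apply, Matrix.smul_apply,
      Matrix.of_apply, Matrix.cons_val_zero, Matrix.cons_val_one, Matrix.head_cons,
      Matrix.cons_val_two, Matrix.tail_cons, Matrix.head_cons, Matrix.tail_cons, Matrix.head_fin_const,
      Fin.zero_eta, Fin.mk_one, Fin.isValue, Fin.reduceFinMk, smul_eq_mul,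
      if_true, if_false, Fin.reduceEq, reduceIte] <;> ring

lemma Gadj_det (u v w : K) : (Gadj u v w).det = (u*v*w)^2 := by
  rw [Matrix.det_fin_three]
  simp only [Gadj, Matrix.of_apply, Matrix.cons_val_zero, Matrix.cons_val_one,
    Matrix.head_cons, Matrix.cons_val_two, Matrix.tail_cons]
  ring

section PartI
variable (S : Matrix (Fin 3) (Fin 3) K) (p : Fin 8 → Fin 3 → K)

-- PART I as a standalone lemma
lemma partI (hS : IsUnit S.det)
    (hinvol : ∃ c : K, c ≠ 0 ∧ S * S = c • (1 : Matrix (Fin 3) (Fin 3) K))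
    (hp0 : ∀ i, p i ≠ 0)
    (hdist : ∀ i j, i ≠ j → ∀ c : K, c • p i ≠ p j)
    (hσ1 : ∃ c : K, c ≠ 0 ∧ S.mulVec (p 0) = c • p 7)
    (hσ2 : ∃ c : K, c ≠ 0 ∧ S.mulVec (p 1) = c • p 6)
    (hσ3 : ∃ c : K, c ≠ 0 ∧ S.mulVec (p 2) = c • p 5)
    (hσ4 : ∃ c : K, c ≠ 0 ∧ S.mulVec (p 3) = c • p 4)
    (hl1 : ¬ (det3 (p 0) (p 7) (p 1) = 0 ∧ det3 (p 0) (p 7) (p 6) = 0))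
    (b0 : Fin 3 → K) (hb00 : b0 ≠ 0)
    (hb1 : det3 b0 (p 0) (p 7) = 0 ∧ det3 b0 (p 1) (p 6) = 0) :
    det3 b0 (p 2) (p 5) = 0 ∧ det3 b0 (p 3) (p 4) = 0 := by
  obtain ⟨c, hc, hSS⟩ := hinvol
  obtain ⟨c1, hc1, hs1⟩ := hσ1
  obtain ⟨c2, hc2, hs2⟩ := hσ2
  obtain ⟨c3, hc3, hs3⟩ := hσ3
  obtain ⟨c4, hc4, hs4⟩ := hσ4
  have hμden : (-c : K) ≠ 0 := neg_ne_zero.mpr hc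
  set μ : K := (-c)⁻¹ * S.det with hμdef
  have pairlem : ∀ (a b : Fin 3 → K) (γ : K), γ ≠ 0 → S.mulVec a = γ • b →
      S.transpose.mulVec (cp a b) = μ • cp a b := by
    intro a b γ hγ hab
    have hSSa : S.mulVec (S.mulVec a) = c • a := by
      rw [Matrix.mulVec_mulVec, hSS, Matrix.smul_mulVec, Matrix.one_mulVec]
    have hb : S.mulVec b = (γ⁻¹ * c) • a := by
      rw [hab, Matrix.mulVec_smul] at hSSa
      calc S.mulVec b = (γ⁻¹ * γ) • S.mulVec b := by
            rw [inv_mul_cancel₀ hγ, one_smul]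
      _ = γ⁻¹ • (γ • S.mulVec b) := by rw [smul_smul]
      _ = γ⁻¹ • (c • a) := by rw [hSSa]
      _ = (γ⁻¹ * c) • a := by rw [smul_smul]
    have key := sT_cp S a b
    rw [hab, hb, cp_smul_left, cp_smul_right, smul_smul] at key
    have hgc : γ * (γ⁻¹ * c) = c := by field_simp
    rw [hgc, cp_anticomm b a, smul_neg, ← neg_smul, Matrix.mulVec_smul] at key
    calc S.transpose.mulVec (cp a b)
        = (-c)⁻¹ • ((-c) • S.transpose.mulVec (cp a b)) := by
          rw [smul_smul, inv_mul_cancel₀ hμden, one_smul]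
    _ = (-c)⁻¹ • (S.det • cp a b) := by rw [key]
    _ = μ • cp a b := by rw [smul_smul]
  have eig1 := pairlem (p 0) (p 7) c1 hc1 hs1
  have eig2 := pairlem (p 1) (p 6) c2 hc2 hs2
  have eig3 := pairlem (p 2) (p 5) c3 hc3 hs3
  have eig4 := pairlem (p 3) (p 4) c4 hc4 hs4
  have hscalar : ∀ m : K, S = m • 1 → False := by
    intro m hm
    have hP : S.mulVec (p 0) = m • p 0 := by
      rw [hm, Matrix.smul_mulVec, Matrix.one_mulVec]
    rw [hs1] at hP
    apply hdist 0 7 (by decide) (c1⁻¹ * m)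
    calc (c1⁻¹ * m) • p 0 = c1⁻¹ • (m • p 0) := by rw [smul_smul]
    _ = c1⁻¹ • (c1 • p 7) := by rw [← hP]
    _ = p 7 := by rw [smul_smul, inv_mul_cancel₀ hc1, one_smul]
  have hSfromT : ∀ m : K, S.transpose = m • 1 → False := by
    intro m hm
    apply hscalar m
    calc S = S.transpose.transpose := (Matrix.transpose_transpose S).symm
    _ = (m • (1 : Matrix (Fin 3) (Fin 3) K)).transpose := by rw [hm]
    _ = m • 1 := by rw [Matrix.transpose_smul, Matrix.transpose_one]
  have hd3 : det3 (cp (p 0) (p 7)) (cp (p 1) (p 6)) (cp (p 2) (p 5)) = 0 := by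
    by_contra hne
    exact hSfromT μ (eigen_scalar eig1 eig2 eig3 hne)
  have hd4 : det3 (cp (p 0) (p 7)) (cp (p 1) (p 6)) (cp (p 3) (p 4)) = 0 := by
    by_contra hne
    exact hSfromT μ (eigen_scalar eig1 eig2 eig4 hne)
  have hcpne : ∀ i j : Fin 8, i ≠ j → cp (p i) (p j) ≠ 0 := by
    intro i j hij h
    obtain ⟨e, he⟩ := cp_eq_zero (hp0 i) h
    exact hdist i j hij e he.symm
  have hn12 : cp (cp (p 0) (p 7)) (cp (p 1) (p 6)) ≠ 0 := by
    intro h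
    obtain ⟨ρ, hρ⟩ := cp_eq_zero (hcpne 0 7 (by decide)) h
    have hρ0 : ρ ≠ 0 := by
      intro h0; rw [h0, zero_smul] at hρ
      exact hcpne 1 6 (by decide) hρ
    apply hl1
    have k1 : dotProduct (p 1) (cp (p 0) (p 7)) = 0 := by
      have hh := dot_cp_self_left (p 1) (p 6)
      rw [hρ, dot_smul_right] at hh
      exact (mul_eq_zero.mp hh).resolve_left hρ0
    have k6 : dotProduct (p 6) (cp (p 0) (p 7)) = 0 := by
      have hh := dot_cp_self_right (p 1) (p 6)
      rw [hρ, dot_smul_right] at hh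
      exact (mul_eq_zero.mp hh).resolve_left hρ0
    constructor
    · rw [det3_cyc, det3_eq_dot]; exact k1
    · rw [det3_cyc, det3_eq_dot]; exact k6
  have hdot1 : dotProduct (cp (p 0) (p 7)) b0 = 0 := by
    rw [dot_comm, ← det3_eq_dot]; exact hb1.1
  have hdot2 : dotProduct (cp (p 1) (p 6)) b0 = 0 := by
    rw [dot_comm, ← det3_eq_dot]; exact hb1.2
  obtain ⟨κ, hκ, hb0rep⟩ := perp_perp hdot1 hdot2 hn12 hb00
  constructor
  · rw [det3_eq_dot, hb0rep, dot_smul_left, ← det3_eq_dot', hd3, mul_zero]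
  · rw [det3_eq_dot, hb0rep, dot_smul_left, ← det3_eq_dot', hd4, mul_zero]
end PartI

end DPL

open DPL in
/-- **The double Pascal line.** Let `σ` be a projective involution of ℙ²(K)
(induced by a matrix `S` with `S² = c·1`), `C` a `σ`-invariant conic (given by a
symmetric matrix `Mq`), and `p₁,…,p₈` eight distinct points on `C` with
`σ(p₁)=p₈`, `σ(p₂)=p₇`, `σ(p₃)=p₆`, `σ(p₄)=p₅`. Then the five intersection
points `(p₁p₈)∩(p₂p₇)`, `(p₁p₅)∩(p₃p₇)`, `(p₂p₅)∩(p₃p₈)`, `(p₁p₆)∩(p₄p₇)`,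
`(p₂p₆)∩(p₄p₈)` are collinear. -/

theorem stmt15 {K : Type*} [Field K]
    (S : Matrix (Fin 3) (Fin 3) K) (hS : IsUnit S.det)
    (hinvol : ∃ c : K, c ≠ 0 ∧ S * S = c • (1 : Matrix (Fin 3) (Fin 3) K))
    (Mq : Matrix (Fin 3) (Fin 3) K) (hMq : Mq.IsSymm) (hMqdet : Mq.det ≠ 0)
    -- the conic is invariant under σ
    (hCinv : ∃ c : K, c ≠ 0 ∧ S.transpose * Mq * S = c • Mq)
    (p : Fin 8 → Fin 3 → K) (hp0 : ∀ i, p i ≠ 0)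
    -- the eight points lie on the conic
    (hponC : ∀ i, dotProduct (p i) (Mq.mulVec (p i)) = 0)
    -- the eight points are pairwise distinct as points of ℙ²(K)
    (hdist : ∀ i j, i ≠ j → ∀ c : K, c • p i ≠ p j)
    -- σ(p₁) = p₈, σ(p₂) = p₇, σ(p₃) = p₆, σ(p₄) = p₅
    (hσ1 : ∃ c : K, c ≠ 0 ∧ S.mulVec (p 0) = c • p 7)
    (hσ2 : ∃ c : K, c ≠ 0 ∧ S.mulVec (p 1) = c • p 6)
    (hσ3 : ∃ c : K, c ≠ 0 ∧ S.mulVec (p 2) = c • p 5)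
    (hσ4 : ∃ c : K, c ≠ 0 ∧ S.mulVec (p 3) = c • p 4)
    -- the relevant pairs of lines are distinct
    (hl1 : ¬ (det3 (p 0) (p 7) (p 1) = 0 ∧ det3 (p 0) (p 7) (p 6) = 0))
    (hl2 : ¬ (det3 (p 0) (p 4) (p 2) = 0 ∧ det3 (p 0) (p 4) (p 6) = 0))
    (hl3 : ¬ (det3 (p 1) (p 4) (p 2) = 0 ∧ det3 (p 1) (p 4) (p 7) = 0))
    (hl4 : ¬ (det3 (p 0) (p 5) (p 3) = 0 ∧ det3 (p 0) (p 5) (p 6) = 0))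
    (hl5 : ¬ (det3 (p 1) (p 5) (p 3) = 0 ∧ det3 (p 1) (p 5) (p 7) = 0))
    -- the five intersection points
    (b : Fin 5 → Fin 3 → K) (hb0 : ∀ i, b i ≠ 0)
    (hb1 : det3 (b 0) (p 0) (p 7) = 0 ∧ det3 (b 0) (p 1) (p 6) = 0)
    (hb2 : det3 (b 1) (p 0) (p 4) = 0 ∧ det3 (b 1) (p 2) (p 6) = 0)
    (hb3 : det3 (b 2) (p 1) (p 4) = 0 ∧ det3 (b 2) (p 2) (p 7) = 0)
    (hb4 : det3 (b 3) (p 0) (p 5) = 0 ∧ det3 (b 3) (p 3) (p 6) = 0)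
    (hb5 : det3 (b 4) (p 1) (p 5) = 0 ∧ det3 (b 4) (p 3) (p 7) = 0) :
    ∃ l : Fin 3 → K, l ≠ 0 ∧ ∀ i : Fin 5, dotProduct l (b i) = 0 := by
  classical
  -- Part I : the two extra incidences of b 0
  obtain ⟨hb0n3, hb0n4⟩ := partI S p hS hinvol hp0 hdist hσ1 hσ2 hσ3 hσ4 hl1 (b 0) (hb0 0) hb1
  -- Part II : coordinate frame adapted to the conic
  have hframe : ∃ g : Fin 3 → K, dotProduct g (Mq.mulVec g) = 0 ∧
      det3 (p 0) (p 7) g ≠ 0 := by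
    by_cases h1 : det3 (p 0) (p 7) (p 1) = 0
    · exact ⟨p 6, hponC 6, fun h6 => hl1 ⟨h1, h6⟩⟩
    · exact ⟨p 1, hponC 1, h1⟩
  obtain ⟨g, hgC, hgdet⟩ := hframe
  set A : Matrix (Fin 3) (Fin 3) K := Matrix.of ![p 0, p 7, g] with hA
  have hAdet : A.det ≠ 0 := hgdet
  have hAu : IsUnit A.det := isUnit_iff_ne_zero.mpr hAdet
  have hATu : IsUnit A.transpose.det := by rw [Matrix.det_transpose]; exact hAu
  set R : Matrix (Fin 3) (Fin 3) K := A.transpose⁻¹ with hR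
  have hRu : IsUnit R.det := Matrix.isUnit_nonsing_inv_det _ hATu
  have hRA : A.transpose * R = 1 := Matrix.mul_nonsing_inv _ hATu
  have hRecover : ∀ x : Fin 3 → K, A.transpose.mulVec (R.mulVec x) = x := by
    intro x; rw [Matrix.mulVec_mulVec, hRA, Matrix.one_mulVec]
  set M' : Matrix (Fin 3) (Fin 3) K := A * Mq * A.transpose with hM'
  have hM'symm : M'.transpose = M' := by
    rw [hM', Matrix.transpose_mul, Matrix.transpose_mul, Matrix.transpose_transpose,
      hMq.eq, ← mul_assoc]
  set u : K := M' 0 1 with hu_def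
  set v : K := M' 1 2 with hv_def
  set w : K := M' 0 2 with hw_def
  have e10 : M' 1 0 = u := by
    conv_lhs => rw [← hM'symm]
    rw [Matrix.transpose_apply]
  have e20 : M' 2 0 = w := by
    conv_lhs => rw [← hM'symm]
    rw [Matrix.transpose_apply]
  have e21 : M' 2 1 = v := by
    conv_lhs => rw [← hM'symm]
    rw [Matrix.transpose_apply]
  have e00 : M' 0 0 = 0 := by rw [hM', conj_apply]; exact hponC 0
  have e11 : M' 1 1 = 0 := by rw [hM', conj_apply]; exact hponC 7
  have e22 : M' 2 2 = 0 := by rw [hM', conj_apply]; exact hgC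
  have hdM1 : M'.det = A.det * Mq.det * A.det := by
    rw [hM', Matrix.det_mul, Matrix.det_mul, Matrix.det_transpose]
  have hdM2 : M'.det = 2 * (u * v * w) := by
    rw [Matrix.det_fin_three, e00, e11, e22, e10, e20, e21, ← hu_def, ← hv_def, ← hw_def]
    ring
  have h2uvw : (2 : K) * (u * v * w) ≠ 0 := by
    rw [← hdM2, hdM1]
    exact mul_ne_zero (mul_ne_zero hAdet hMqdet) hAdet
  have huvw : u * v * w ≠ 0 := right_ne_zero_of_mul h2uvw
  have h2K : (2 : K) ≠ 0 := left_ne_zero_of_mul h2uvw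
  have hu0 : u ≠ 0 := left_ne_zero_of_mul (left_ne_zero_of_mul huvw)
  have hv0 : v ≠ 0 := right_ne_zero_of_mul (left_ne_zero_of_mul huvw)
  have hw0 : w ≠ 0 := right_ne_zero_of_mul huvw
  -- the conic in the new coordinates
  have hconic : ∀ i : Fin 8, u * (R.mulVec (p i)) 0 * (R.mulVec (p i)) 1
      + w * (R.mulVec (p i)) 0 * (R.mulVec (p i)) 2
      + v * (R.mulVec (p i)) 1 * (R.mulVec (p i)) 2 = 0 := by
    intro i
    set y : Fin 3 → K := R.mulVec (p i) with hy
    have hq : dotProduct y (M'.mulVec y) = 0 := by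
      rw [hy, hM', ← quad_transform, hRecover]
      exact hponC i
    have hq2 : dotProduct y (M'.mulVec y)
        = 2 * (u * y 0 * y 1 + w * y 0 * y 2 + v * y 1 * y 2) := by
      rw [dot3]
      simp only [mulVec3]
      rw [e00, e11, e22, e10, e20, e21]
      simp only [← hu_def, ← hv_def, ← hw_def]
      ring
    rw [hq2] at hq
    exact (mul_eq_zero.mp hq).resolve_left h2K
  have hPi : ∀ i : Fin 8, ∃ σt τt μt : K, ¬(σt = 0 ∧ τt = 0) ∧ μt ≠ 0 ∧
      R.mulVec (p i) = μt • ![-(v*σt*τt), σt*(u*σt+w*τt), τt*(u*σt+w*τt)] :=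
    fun i => param hu0 hv0 hw0 (mulVec_ne_zero hRu (hp0 i)) (hconic i)
  choose σ τ μp hστ hμ hrep using hPi
  set Q : Matrix (Fin 3) (Fin 3) K := Gadj u v w * R with hQdef
  have hQu : IsUnit Q.det := by
    rw [hQdef, Matrix.det_mul, Gadj_det]
    exact isUnit_iff_ne_zero.mpr
      (mul_ne_zero (pow_ne_zero 2 huvw) (isUnit_iff_ne_zero.mp hRu))
  set ψ : Fin 8 → Fin 3 → K := fun i => ![σ i ^ 2, σ i * τ i, τ i ^ 2] with hψdef
  set lam : Fin 8 → K := fun i => μp i * (u * v * w) with hlam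
  have hlam0 : ∀ i, lam i ≠ 0 := fun i => mul_ne_zero (hμ i) huvw
  have hQp : ∀ i, Q.mulVec (p i) = lam i • ψ i := by
    intro i
    rw [hQdef, ← Matrix.mulVec_mulVec, hrep i, Matrix.mulVec_smul,
      ← Gmat_mulVec u v w (σ i) (τ i), Matrix.mulVec_mulVec, Gadj_mul_Gmat,
      Matrix.smul_mulVec, Matrix.one_mulVec, smul_smul]
  -- Part III : everything in parametrized coordinates
  have hψne : ∀ i, ψ i ≠ 0 := by
    intro i h
    apply hστ i
    have h0 := congrFun h 0
    have h2 := congrFun h 2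
    simp only [hψdef, Matrix.cons_val_zero, Matrix.cons_val_two, Matrix.tail_cons,
      Matrix.head_cons, Pi.zero_apply] at h0 h2
    exact ⟨pow_eq_zero_iff two_ne_zero |>.mp h0, pow_eq_zero_iff two_ne_zero |>.mp h2⟩
  have hcp_dd : ∀ i j : Fin 8, cp (ψ i) (ψ j) = (σ i * τ j - σ j * τ i) •
      ![τ i * τ j, -(σ i * τ j + σ j * τ i), σ i * σ j] := by
    intro i j
    apply vec_ext <;>
      simp only [hψdef, cp_apply0, cp_apply1, cp_apply2, sap, Matrix.cons_val_zero,
        Matrix.cons_val_one, Matrix.head_cons, Matrix.cons_val_two, Matrix.tail_cons] <;>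
      ring
  have hdd : ∀ i j : Fin 8, i ≠ j → σ i * τ j - σ j * τ i ≠ 0 := by
    intro i j hij h0
    have hz : cp (ψ i) (ψ j) = 0 := by rw [hcp_dd, h0, zero_smul]
    obtain ⟨e, he⟩ := cp_eq_zero (hψne i) hz
    apply hdist i j hij ((lam i)⁻¹ * (lam j * e))
    apply mulVec_inj hQu
    rw [Matrix.mulVec_smul, hQp i, hQp j, he, smul_smul, smul_smul]
    congr 1
    rw [mul_comm ((lam i)⁻¹) (lam j * e), mul_assoc, inv_mul_cancel₀ (hlam0 i), mul_one]
  have hV : ∀ i j k : Fin 8, det3 (ψ i) (ψ j) (ψ k)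
      = (σ i * τ j - σ j * τ i) * (σ i * τ k - σ k * τ i) * (σ j * τ k - σ k * τ j) := by
    intro i j k
    simp only [hψdef]
    exact vand _ _ _ _ _ _
  have hVne : ∀ i j k : Fin 8, i ≠ j → i ≠ k → j ≠ k → det3 (ψ i) (ψ j) (ψ k) ≠ 0 := by
    intro i j k h1 h2 h3
    rw [hV]
    exact mul_ne_zero (mul_ne_zero (hdd i j h1) (hdd i k h2)) (hdd j k h3)
  set bq : Fin 5 → Fin 3 → K := fun j => Q.mulVec (b j) with hbqdef
  have hbqne : ∀ j, bq j ≠ 0 := fun j => mulVec_ne_zero hQu (hb0 j)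
  have htrans : ∀ (x : Fin 3 → K) (i k : Fin 8), det3 x (p i) (p k) = 0 →
      dotProduct (Q.mulVec x) (cp (ψ i) (ψ k)) = 0 := by
    intro x i k h
    have h2 : det3 (Q.mulVec x) (Q.mulVec (p i)) (Q.mulVec (p k)) = 0 := by
      rw [det3_mulVec, h, mul_zero]
    rw [hQp i, hQp k, det3_smul₂, det3_smul₃, det3_eq_dot] at h2
    have h3 := (mul_eq_zero.mp h2).resolve_left (hlam0 i)
    exact (mul_eq_zero.mp h3).resolve_left (hlam0 k)
  have flipd : ∀ (x a' b' : Fin 3 → K), dotProduct x (cp a' b') = 0 →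
      dotProduct x (cp b' a') = 0 := by
    intro x a' b' h
    rw [cp_anticomm b' a', dotProduct_neg, h, neg_zero]
  have P00 : dotProduct (bq 0) (cp (ψ 0) (ψ 7)) = 0 := htrans (b 0) 0 7 hb1.1
  have P01 : dotProduct (bq 0) (cp (ψ 1) (ψ 6)) = 0 := htrans (b 0) 1 6 hb1.2
  have P02 : dotProduct (bq 0) (cp (ψ 2) (ψ 5)) = 0 := htrans (b 0) 2 5 hb0n3
  have P03 : dotProduct (bq 0) (cp (ψ 3) (ψ 4)) = 0 := htrans (b 0) 3 4 hb0n4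
  have P10 : dotProduct (bq 1) (cp (ψ 0) (ψ 4)) = 0 := htrans (b 1) 0 4 hb2.1
  have P11 : dotProduct (bq 1) (cp (ψ 2) (ψ 6)) = 0 := htrans (b 1) 2 6 hb2.2
  have P20 : dotProduct (bq 2) (cp (ψ 1) (ψ 4)) = 0 := htrans (b 2) 1 4 hb3.1
  have P21 : dotProduct (bq 2) (cp (ψ 2) (ψ 7)) = 0 := htrans (b 2) 2 7 hb3.2
  have P30 : dotProduct (bq 3) (cp (ψ 0) (ψ 5)) = 0 := htrans (b 3) 0 5 hb4.1
  have P31 : dotProduct (bq 3) (cp (ψ 3) (ψ 6)) = 0 := htrans (b 3) 3 6 hb4.2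
  have P40 : dotProduct (bq 4) (cp (ψ 1) (ψ 5)) = 0 := htrans (b 4) 1 5 hb5.1
  have P41 : dotProduct (bq 4) (cp (ψ 3) (ψ 7)) = 0 := htrans (b 4) 3 7 hb5.2
  have hident : ∀ (x : Fin 3 → K) (a' b' c' d' : Fin 8), x ≠ 0 →
      dotProduct x (cp (ψ a') (ψ b')) = 0 →
      dotProduct x (cp (ψ c') (ψ d')) = 0 →
      det3 (ψ a') (ψ b') (ψ c') ≠ 0 → det3 (ψ c') (ψ d') (ψ a') ≠ 0 →
      ∃ κ : K, κ ≠ 0 ∧ x = κ • cp (cp (ψ a') (ψ b')) (cp (ψ c') (ψ d')) := by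
    intro x a' b' c' d' hx hd1 hd2 hD1 hD2
    have hcab : cp (ψ a') (ψ b') ≠ 0 := by
      intro h; exact hD1 (by rw [det3_eq_dot', h, zero_dotProduct])
    have hccd : cp (ψ c') (ψ d') ≠ 0 := by
      intro h; exact hD2 (by rw [det3_eq_dot', h, zero_dotProduct])
    have hcc : cp (cp (ψ a') (ψ b')) (cp (ψ c') (ψ d')) ≠ 0 := by
      intro h
      obtain ⟨ρ, hρ⟩ := cp_eq_zero hcab h
      have hρ0 : ρ ≠ 0 := fun h0 => hccd (by rw [hρ, h0, zero_smul])
      have h1 : dotProduct (ψ c') (cp (ψ c') (ψ d')) = 0 := dot_cp_self_left _ _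
      rw [hρ, dot_smul_right] at h1
      have h3 := (mul_eq_zero.mp h1).resolve_left hρ0
      apply hD1
      rw [det3_cyc, det3_eq_dot]
      exact h3
    have hd1' : dotProduct (cp (ψ a') (ψ b')) x = 0 := by rw [dot_comm]; exact hd1
    have hd2' : dotProduct (cp (ψ c') (ψ d')) x = 0 := by rw [dot_comm]; exact hd2
    exact perp_perp hd1' hd2' hcc hx
  -- Pascal instances
  have pas1 : det3 (cp (cp (ψ 0) (ψ 4)) (cp (ψ 6) (ψ 2)))
      (cp (cp (ψ 4) (ψ 1)) (cp (ψ 2) (ψ 7)))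
      (cp (cp (ψ 1) (ψ 6)) (cp (ψ 7) (ψ 0))) = 0 := by
    simp only [hψdef]
    exact pascal_psi (σ 0) (τ 0) (σ 4) (τ 4) (σ 1) (τ 1) (σ 6) (τ 6) (σ 2) (τ 2) (σ 7) (τ 7)
  have pas3 : det3 (cp (cp (ψ 4) (ψ 0)) (cp (ψ 2) (ψ 6)))
      (cp (cp (ψ 0) (ψ 5)) (cp (ψ 6) (ψ 3)))
      (cp (cp (ψ 5) (ψ 2)) (cp (ψ 3) (ψ 4))) = 0 := by
    simp only [hψdef]
    exact pascal_psi (σ 4) (τ 4) (σ 0) (τ 0) (σ 5) (τ 5) (σ 2) (τ 2) (σ 6) (τ 6) (σ 3) (τ 3)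
  have pas4 : det3 (cp (cp (ψ 3) (ψ 7)) (cp (ψ 5) (ψ 1)))
      (cp (cp (ψ 7) (ψ 2)) (cp (ψ 1) (ψ 4)))
      (cp (cp (ψ 2) (ψ 5)) (cp (ψ 4) (ψ 3))) = 0 := by
    simp only [hψdef]
    exact pascal_psi (σ 3) (τ 3) (σ 7) (τ 7) (σ 2) (τ 2) (σ 5) (τ 5) (σ 1) (τ 1) (σ 4) (τ 4)
  -- identifications for hexagon 1
  obtain ⟨κ11, hκ11, hI11⟩ := hident (bq 1) 0 4 6 2 (hbqne 1) P10 (flipd _ _ _ P11)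
    (hVne 0 4 6 (by decide) (by decide) (by decide)) (hVne 6 2 0 (by decide) (by decide) (by decide))
  obtain ⟨κ12, hκ12, hI12⟩ := hident (bq 2) 4 1 2 7 (hbqne 2) (flipd _ _ _ P20) P21
    (hVne 4 1 2 (by decide) (by decide) (by decide)) (hVne 2 7 4 (by decide) (by decide) (by decide))
  obtain ⟨κ10, hκ10, hI10⟩ := hident (bq 0) 1 6 7 0 (hbqne 0) P01 (flipd _ _ _ P00)
    (hVne 1 6 7 (by decide) (by decide) (by decide)) (hVne 7 0 1 (by decide) (by decide) (by decide))
  have detA : det3 (bq 0) (bq 1) (bq 2) = 0 := by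
    rw [det3_cyc, det3_cyc, hI11, hI12, hI10, det3_smul₁, det3_smul₂, det3_smul₃, pas1]
    ring
  -- identifications for hexagon 3
  obtain ⟨κ31, hκ31, hI31⟩ := hident (bq 1) 4 0 2 6 (hbqne 1) (flipd _ _ _ P10) P11
    (hVne 4 0 2 (by decide) (by decide) (by decide)) (hVne 2 6 4 (by decide) (by decide) (by decide))
  obtain ⟨κ33, hκ33, hI33⟩ := hident (bq 3) 0 5 6 3 (hbqne 3) P30 (flipd _ _ _ P31)
    (hVne 0 5 6 (by decide) (by decide) (by decide)) (hVne 6 3 0 (by decide) (by decide) (by decide))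
  obtain ⟨κ30, hκ30, hI30⟩ := hident (bq 0) 5 2 3 4 (hbqne 0) (flipd _ _ _ P02) P03
    (hVne 5 2 3 (by decide) (by decide) (by decide)) (hVne 3 4 5 (by decide) (by decide) (by decide))
  have detB : det3 (bq 0) (bq 1) (bq 3) = 0 := by
    rw [det3_cyc, det3_cyc, hI31, hI33, hI30, det3_smul₁, det3_smul₂, det3_smul₃, pas3]
    ring
  -- identifications for hexagon 4
  obtain ⟨κ44, hκ44, hI44⟩ := hident (bq 4) 3 7 5 1 (hbqne 4) P41 (flipd _ _ _ P40)
    (hVne 3 7 5 (by decide) (by decide) (by decide)) (hVne 5 1 3 (by decide) (by decide) (by decide))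
  obtain ⟨κ42, hκ42, hI42⟩ := hident (bq 2) 7 2 1 4 (hbqne 2) (flipd _ _ _ P21) P20
    (hVne 7 2 1 (by decide) (by decide) (by decide)) (hVne 1 4 7 (by decide) (by decide) (by decide))
  obtain ⟨κ40, hκ40, hI40⟩ := hident (bq 0) 2 5 4 3 (hbqne 0) P02 (flipd _ _ _ P03)
    (hVne 2 5 4 (by decide) (by decide) (by decide)) (hVne 4 3 2 (by decide) (by decide) (by decide))
  have detC : det3 (bq 0) (bq 2) (bq 4) = 0 := by
    rw [det3_swap₂₃, det3_cyc, det3_cyc, hI44, hI42, hI40, det3_smul₁, det3_smul₂,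
      det3_smul₃, pas4]
    ring
  -- the two auxiliary independence facts
  have hx04 : cp (ψ 0) (ψ 4) ≠ 0 := by
    intro h
    exact hVne 0 4 6 (by decide) (by decide) (by decide)
      (by rw [det3_eq_dot', h, zero_dotProduct])
  have hx07 : cp (ψ 0) (ψ 7) ≠ 0 := by
    intro h
    exact hVne 0 7 6 (by decide) (by decide) (by decide)
      (by rw [det3_eq_dot', h, zero_dotProduct])
  have hx14 : cp (ψ 1) (ψ 4) ≠ 0 := by
    intro h
    exact hVne 1 4 6 (by decide) (by decide) (by decide)
      (by rw [det3_eq_dot', h, zero_dotProduct])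
  have hx16 : cp (ψ 1) (ψ 6) ≠ 0 := by
    intro h
    exact hVne 1 6 0 (by decide) (by decide) (by decide)
      (by rw [det3_eq_dot', h, zero_dotProduct])
  have hD1 : cp (bq 0) (bq 1) ≠ 0 := by
    intro h
    obtain ⟨ρ, hρ⟩ := cp_eq_zero (hbqne 0) h
    have hρ0 : ρ ≠ 0 := fun h0 => hbqne 1 (by rw [hρ, h0, zero_smul])
    have hQ04 : dotProduct (bq 0) (cp (ψ 0) (ψ 4)) = 0 := by
      have hh := P10
      rw [hρ, dot_smul_left] at hh
      exact (mul_eq_zero.mp hh).resolve_left hρ0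
    by_cases hc : cp (ψ 0) (bq 0) = 0
    · obtain ⟨ς, hς⟩ := cp_eq_zero (hψne 0) hc
      have hς0 : ς ≠ 0 := fun h0 => hbqne 0 (by rw [hς, h0, zero_smul])
      have hh := P01
      rw [hς, dot_smul_left] at hh
      have h3 := (mul_eq_zero.mp hh).resolve_left hς0
      exact hVne 0 1 6 (by decide) (by decide) (by decide) (by rw [det3_eq_dot]; exact h3)
    · obtain ⟨κa, hκa, ea⟩ := perp_perp (dot_cp_self_left (ψ 0) (ψ 4)) hQ04 hc hx04
      obtain ⟨κb, hκb, eb⟩ := perp_perp (dot_cp_self_left (ψ 0) (ψ 7)) P00 hc hx07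
      have h4 : dotProduct (ψ 4) (cp (ψ 0) (bq 0)) = 0 := by
        have hh := dot_cp_self_right (ψ 0) (ψ 4)
        rw [ea, dot_smul_right] at hh
        exact (mul_eq_zero.mp hh).resolve_left hκa
      have h5 : det3 (ψ 4) (ψ 0) (ψ 7) = 0 := by
        rw [det3_eq_dot, eb, dot_smul_right, h4, mul_zero]
      exact hVne 4 0 7 (by decide) (by decide) (by decide) h5
  have hD2 : cp (bq 0) (bq 2) ≠ 0 := by
    intro h
    obtain ⟨ρ, hρ⟩ := cp_eq_zero (hbqne 0) h
    have hρ0 : ρ ≠ 0 := fun h0 => hbqne 2 (by rw [hρ, h0, zero_smul])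
    have hQ14 : dotProduct (bq 0) (cp (ψ 1) (ψ 4)) = 0 := by
      have hh := P20
      rw [hρ, dot_smul_left] at hh
      exact (mul_eq_zero.mp hh).resolve_left hρ0
    by_cases hc : cp (ψ 1) (bq 0) = 0
    · obtain ⟨ς, hς⟩ := cp_eq_zero (hψne 1) hc
      have hς0 : ς ≠ 0 := fun h0 => hbqne 0 (by rw [hς, h0, zero_smul])
      have hh := P00
      rw [hς, dot_smul_left] at hh
      have h3 := (mul_eq_zero.mp hh).resolve_left hς0
      exact hVne 1 0 7 (by decide) (by decide) (by decide) (by rw [det3_eq_dot]; exact h3)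
    · obtain ⟨κa, hκa, ea⟩ := perp_perp (dot_cp_self_left (ψ 1) (ψ 4)) hQ14 hc hx14
      obtain ⟨κb, hκb, eb⟩ := perp_perp (dot_cp_self_left (ψ 1) (ψ 6)) P01 hc hx16
      have h4 : dotProduct (ψ 4) (cp (ψ 1) (bq 0)) = 0 := by
        have hh := dot_cp_self_right (ψ 1) (ψ 4)
        rw [ea, dot_smul_right] at hh
        exact (mul_eq_zero.mp hh).resolve_left hκa
      have h5 : det3 (ψ 4) (ψ 1) (ψ 6) = 0 := by
        rw [det3_eq_dot, eb, dot_smul_right, h4, mul_zero]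
      exact hVne 4 1 6 (by decide) (by decide) (by decide) h5
  obtain ⟨α, β, hαβ⟩ := span_of_det3 detA hD1
  obtain ⟨γ, δ, hγδ⟩ := span_of_det3 detC hD2
  have detE : det3 (bq 0) (bq 1) (bq 4) = 0 := by
    rw [hγδ, det3_add₃, det3_smul₃, det3_smul₃, det3_self₁₃, detA]
    ring
  refine ⟨Q.transpose.mulVec (cp (bq 0) (bq 1)), ?_, ?_⟩
  · exact mulVec_ne_zero (by rw [Matrix.det_transpose]; exact hQu) hD1
  · have hdt : ∀ x : Fin 3 → K,
        dotProduct (Q.transpose.mulVec (cp (bq 0) (bq 1))) x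
          = dotProduct (cp (bq 0) (bq 1)) (Q.mulVec x) := by
      intro x
      simp only [dot3, mulVec3, Matrix.transpose_apply]
      ring
    intro i
    fin_cases i
    · rw [hdt, ← det3_eq_dot']
      exact det3_self₁₃ (bq 0) (bq 1)
    · rw [hdt, ← det3_eq_dot']
      exact det3_self₂₃ (bq 0) (bq 1)
    · rw [hdt, ← det3_eq_dot']
      exact detA
    · rw [hdt, ← det3_eq_dot']
      exact detB
    · rw [hdt, ← det3_eq_dot']
      exact detE
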